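/- A forest graph different from K_1 has no isolated vertices and no isthmi (bridges): every vertex of F(H) has a neighbor, and every edge of F(H) lies on a cycle. -/

import Mathlib

open Cardinal

variable {V : Type*}

/-- `F` is a maximal forest of `G`: an acyclic subgraph of `G` maximal among
acyclic subgraphs of `G` under inclusion. -/
def IsMaximalForest (G F : SimpleGraph V) : Prop :=
  F ≤ G ∧ F.IsAcyclic ∧ ∀ F' : SimpleGraph V, F' ≤ G → F'.IsAcyclic → F ≤ F' → F' = F

/-- The forest graph of `G`: vertices are the maximal forests of `G`,
two adjacent iff they differ by exactly one edge. -/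
def forestGraph (G : SimpleGraph V) :
    SimpleGraph {F : SimpleGraph V // IsMaximalForest G F} where
  Adj F₁ F₂ := (F₁.1.edgeSet \ F₂.1.edgeSet).encard = 1 ∧
               (F₂.1.edgeSet \ F₁.1.edgeSet).encard = 1
  symm := ⟨fun F₁ F₂ h => ⟨h.2, h.1⟩⟩
  loopless := ⟨fun F h => by simp at h⟩

/-- The set of cycles of `G`, each cycle identified with its edge set. -/
def cycleSet (G : SimpleGraph V) : Set (Set (Sym2 V)) :=
  {s | ∃ (v : V) (c : G.Walk v v), c.IsCycle ∧ s = {e | e ∈ c.edges}}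


/-! Maximal forests of `H` are exactly its acyclic subgraphs with the same reachability relation
as `H`. Hence if `uv` is an edge of `H` outside a maximal forest `F` and `f` is any edge of the
`F`-path from `u` to `v`, then `F - f + uv` is again a maximal forest. Two distinct maximal forests
force `H` to contain a cycle, so every `F` misses an edge of `H`, and an exchange gives a
neighbour of `F`. If `F' = F - f + uv` is a neighbour, the `F`-path from `u` to `v` has length at
least two, so it contains an edge `g ≠ f`, and `F - g + uv` is adjacent to both `F` and `F'`:
the edge `FF'` lies on a triangle. -/

theorem Set.encard_diff_eq_one_and_encard_diff_eq_one_iff {α : Type*} {A B : Set α} :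
    (A \ B).encard = 1 ∧ (B \ A).encard = 1 ↔ ∃ a ∈ A, ∃ b ∉ A, B = insert b (A \ {a}) := by
  simp only [Set.encard_eq_one]
  constructor
  · rintro ⟨⟨a, ha⟩, ⟨b, hb⟩⟩
    simp only [Set.ext_iff, Set.mem_sdiff, Set.mem_singleton_iff, Set.mem_insert_iff] at ha hb ⊢
    exact ⟨a, ((ha a).2 rfl).1, b, ((hb b).2 rfl).2, fun x => by grind⟩
  · rintro ⟨a, ha, b, hb, rfl⟩
    exact ⟨⟨a, by ext; grind⟩, ⟨b, by ext; grind⟩⟩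

namespace SimpleGraph

variable {W : Type*} {G : SimpleGraph W} {u v : W}

theorem not_isBridge_of_adj_of_adj {a b c : W} (hab : G.Adj a b) (hac : G.Adj a c)
    (hbc : G.Adj b c) : ¬G.IsBridge s(a, b) := by
  rw [isBridge_iff, not_not]
  have hac' : (G.deleteEdges {s(a, b)}).Adj a c := by simp [hac, hbc.ne.symm, hab.ne]
  have hcb : (G.deleteEdges {s(a, b)}).Adj c b := by simp [hbc.symm, hac.ne.symm, hab.ne.symm]
  exact hac'.reachable.trans hcb.reachable

theorem reachable_sup_edge_eq_of_reachable {x y : W} (h : G.Reachable x y) :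
    (G ⊔ edge x y).Reachable = G.Reachable := by
  have hadj : ∀ ⦃a b⦄, (G ⊔ edge x y).Adj a b → G.Reachable a b := by
    intro a b hab
    rcases hab with hab | hab
    · exact hab.reachable
    obtain ⟨⟨rfl, rfl⟩ | ⟨rfl, rfl⟩, -⟩ := (edge_adj _ _ _ _).mp hab
    exacts [h, h.symm]
  refine le_antisymm (fun a b ⟨w⟩ => ?_) fun a b => Reachable.mono le_sup_left
  induction w with
  | nil => rfl
  | cons hab p ih => exact (hadj hab).trans (ih ⟨p⟩)

theorem Walk.IsTrail.exists_mem_edges_ne {p : G.Walk u v} (hp : p.IsTrail) (h : 1 < p.length)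
    (f : Sym2 W) : ∃ g ∈ p.edges, g ≠ f := by
  classical
  have : 1 < p.edges.toFinset.card := by
    rwa [List.toFinset_card_of_nodup hp.edges_nodup, length_edges]
  simpa using Finset.exists_mem_ne this f

theorem Walk.one_lt_length_of_not_adj (p : G.Walk u v) (hne : u ≠ v) (hnadj : ¬G.Adj u v) :
    1 < p.length := by
  have h0 : p.length ≠ 0 := fun h => hne (eq_of_length_eq_zero h)
  have h1 : p.length ≠ 1 := fun h => hnadj (adj_of_length_eq_one h)
  omega

theorem IsAcyclic.not_reachable_deleteEdges_of_mem_edges (hG : G.IsAcyclic) {p : G.Walk u v}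
    (hp : p.IsPath) {f : Sym2 W} (hf : f ∈ p.edges) : ¬(G.deleteEdges {f}).Reachable u v := by
  classical
  induction f using Sym2.ind with | _ x y =>
  rintro hr
  obtain ⟨q, hq⟩ := reachable_deleteEdges_iff_exists_walk.mp hr
  have hpq : (⟨p, hp⟩ : G.Path u v) = q.toPath := (hG.subsingleton_path u v).elim _ _
  exact hq (q.edges_toPath_subset_edges (congrArg Subtype.val hpq ▸ hf))

theorem edgeSet_deleteEdges_sup_edge (f : Sym2 W) (huv : u ≠ v) :
    (G.deleteEdges {f} ⊔ edge u v).edgeSet = insert s(u, v) (G.edgeSet \ {f}) := by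
  rw [edgeSet_sup, edgeSet_deleteEdges, edgeSet_edge_of_ne huv, Set.union_singleton]

end SimpleGraph

open SimpleGraph

section MaximalForest

variable {H F : SimpleGraph V}

theorem isMaximalForest_iff_maximal :
    IsMaximalForest H F ↔ Maximal (fun F ↦ F ≤ H ∧ F.IsAcyclic) F :=
  ⟨fun ⟨hle, hF, hmax⟩ => ⟨⟨hle, hF⟩, fun F' hF' hFF' => (hmax F' hF'.1 hF'.2 hFF').le⟩,
    fun h => ⟨h.prop.1, h.prop.2, fun _ hle hF' hFF' =>
      le_antisymm (h.le_of_ge ⟨hle, hF'⟩ hFF') hFF'⟩⟩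

theorem isMaximalForest_iff_reachable_eq (hle : F ≤ H) (hF : F.IsAcyclic) :
    IsMaximalForest H F ↔ F.Reachable = H.Reachable := by
  rw [isMaximalForest_iff_maximal, maximal_isAcyclic_iff_reachable_eq hle hF]

theorem IsMaximalForest.le (hF : IsMaximalForest H F) : F ≤ H := hF.1

theorem IsMaximalForest.isAcyclic (hF : IsMaximalForest H F) : F.IsAcyclic := hF.2.1

theorem IsMaximalForest.reachable_eq (hF : IsMaximalForest H F) : F.Reachable = H.Reachable :=
  (isMaximalForest_iff_reachable_eq hF.le hF.isAcyclic).mp hF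

theorem IsMaximalForest.reachable (hF : IsMaximalForest H F) {u v : V} (huv : H.Adj u v) :
    F.Reachable u v :=
  hF.reachable_eq ▸ huv.reachable

theorem IsMaximalForest.eq_of_isAcyclic (hF : IsMaximalForest H F) (hH : H.IsAcyclic) : F = H :=
  (hF.2.2 H le_rfl hH hF.le).symm

theorem IsMaximalForest.exchange (hF : IsMaximalForest H F) {u v : V} (huv : H.Adj u v)
    (hnadj : ¬F.Adj u v) {p : F.Walk u v} (hp : p.IsPath) {f : Sym2 V} (hf : f ∈ p.edges) :
    IsMaximalForest H (F.deleteEdges {f} ⊔ edge u v) := by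
  set F' := F.deleteEdges {f} ⊔ edge u v
  have hle : F' ≤ H := sup_le ((deleteEdges_le _).trans hF.le) ((edge_le_iff _).mpr (Or.inr huv))
  have hF' : F'.IsAcyclic := (hF.isAcyclic.anti (deleteEdges_le _)).sup_edge_of_not_reachable
    (hF.isAcyclic.not_reachable_deleteEdges_of_mem_edges hp hf)
  rw [isMaximalForest_iff_reachable_eq hle hF']
  refine le_antisymm (fun a b => Reachable.mono hle) ?_
  induction f using Sym2.ind with | _ x y =>
  have hFle : F ≤ F' ⊔ edge x y := fun a b hab => by
    by_cases h : s(x, y) = s(a, b)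
    · exact Or.inr ((adj_edge _ _).mpr ⟨h, hab.ne⟩)
    · exact Or.inl (Or.inl (deleteEdges_adj.mpr ⟨hab, by simpa [eq_comm] using h⟩))
  have hxy : F'.Reachable x y := by
    -- otherwise `F' ⊔ edge x y ⊇ F ⊔ edge u v` would be acyclic, although `u, v` are joined in `F`
    by_contra hxy
    have hacyc : (F ⊔ edge u v).IsAcyclic := (hF'.sup_edge_of_not_reachable hxy).anti
      (sup_le hFle (le_sup_right.trans le_sup_left))
    exact (isAcyclic_sup_fromEdgeSet_iff.mp hacyc).2 (hF.reachable huv) |>.elim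
      huv.ne hnadj
  rw [← hF.reachable_eq, ← reachable_sup_edge_eq_of_reachable hxy]
  exact fun a b => Reachable.mono hFle

theorem forestGraph_adj_iff {F F' : {F : SimpleGraph V // IsMaximalForest H F}} :
    (forestGraph H).Adj F F' ↔
      ∃ f ∈ F.1.edgeSet, ∃ e ∉ F.1.edgeSet, F'.1.edgeSet = insert e (F.1.edgeSet \ {f}) :=
  Set.encard_diff_eq_one_and_encard_diff_eq_one_iff

theorem IsMaximalForest.forestGraph_adj_exchange (hF : IsMaximalForest H F) {u v : V}
    (huv : H.Adj u v) (hnadj : ¬F.Adj u v) {p : F.Walk u v} (hp : p.IsPath) {f : Sym2 V}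
    (hf : f ∈ p.edges) : (forestGraph H).Adj ⟨F, hF⟩ ⟨_, hF.exchange huv hnadj hp hf⟩ :=
  forestGraph_adj_iff.mpr
    ⟨f, p.edges_subset_edgeSet hf, s(u, v), hnadj, edgeSet_deleteEdges_sup_edge _ huv.ne⟩

theorem forestGraph_exists_adj (hH : ¬H.IsAcyclic)
    (F : {F : SimpleGraph V // IsMaximalForest H F}) : ∃ F', (forestGraph H).Adj F F' := by
  obtain ⟨F, hF⟩ := F
  obtain ⟨u, v, huv, hnadj⟩ : ∃ u v, H.Adj u v ∧ ¬F.Adj u v := by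
    by_contra! hHF
    exact hH (hF.isAcyclic.anti fun u v => hHF u v)
  obtain ⟨p, hp⟩ := (hF.reachable huv).exists_isPath
  obtain ⟨f, hf⟩ := List.exists_mem_of_ne_nil p.edges
    (mt Walk.edges_eq_nil.mp (Walk.not_nil_of_ne huv.ne))
  exact ⟨_, hF.forestGraph_adj_exchange huv hnadj hp hf⟩

theorem forestGraph_exists_adj_adj {F F' : {F : SimpleGraph V // IsMaximalForest H F}}
    (hadj : (forestGraph H).Adj F F') :
    ∃ F'', (forestGraph H).Adj F F'' ∧ (forestGraph H).Adj F' F'' := by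
  obtain ⟨F, hF⟩ := F
  obtain ⟨F', hF'⟩ := F'
  obtain ⟨f, hfF, e, heF, hE⟩ := forestGraph_adj_iff.mp hadj
  induction e using Sym2.ind with | _ u v =>
  have huv : H.Adj u v := hF'.le (hE ▸ Set.mem_insert _ _ : s(u, v) ∈ F'.edgeSet)
  obtain ⟨p, hp⟩ := (hF.reachable huv).exists_isPath
  obtain ⟨g, hg, hgf⟩ := hp.isTrail.exists_mem_edges_ne (p.one_lt_length_of_not_adj huv.ne heF) f
  have hgF := p.edges_subset_edgeSet hg
  refine ⟨_, hF.forestGraph_adj_exchange huv heF hp hg, forestGraph_adj_iff.mpr ⟨g, ?_, f, ?_, ?_⟩⟩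
  · rw [hE]
    exact Or.inr ⟨hgF, hgf⟩
  · rw [hE]
    rintro (rfl | ⟨-, hff⟩)
    exacts [heF hfF, hff rfl]
  · rw [edgeSet_deleteEdges_sup_edge _ huv.ne, hE]
    ext x
    simp only [Set.mem_insert_iff, Set.mem_sdiff, Set.mem_singleton_iff]
    grind

end MaximalForest

/-- A forest graph with at least two vertices has no isolated vertices and no bridges. -/
theorem forestGraph_no_isolated_no_bridge (H : SimpleGraph V)
    (h : ∃ F₁ F₂ : {F : SimpleGraph V // IsMaximalForest H F}, F₁ ≠ F₂) :
    (∀ F, ∃ F', (forestGraph H).Adj F F') ∧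
      (∀ F F', (forestGraph H).Adj F F' → ¬ (forestGraph H).IsBridge s(F, F')) := by
  obtain ⟨F₁, F₂, hne⟩ := h
  have hH : ¬H.IsAcyclic := fun hH =>
    hne (Subtype.ext ((F₁.2.eq_of_isAcyclic hH).trans (F₂.2.eq_of_isAcyclic hH).symm))
  refine ⟨forestGraph_exists_adj hH, fun F F' hadj => ?_⟩
  obtain ⟨F'', hF'', hF'F''⟩ := forestGraph_exists_adj_adj hadj
  exact not_isBridge_of_adj_of_adj hadj hF'' hF'F''
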